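/- The real cusp X = {(x, y) ∈ ℝ² : x² = y³} is not normally embedded at the origin: for every ε > 0 and every λ > 0 there exist points p, q ∈ X ∩ B(0, ε) such that d_X(p, q) > λ‖p − q‖, where d_X is the inner distance of X. -/

import Mathlib

open Set Metric Filter Topology unitInterval

/-!
The points `(±s³, s²)` of the cusp are `2s³` apart, but by the intermediate value theorem
any path between them inside the cusp crosses the axis `x = 0`, which meets the cusp only
at the origin; so the path has length at least `2s²`, and the ratio `1/s` is unbounded
as `s → 0`.
-/

/-- The inner distance of a set `X`: the infimum of lengths of continuous paths
inside `X` joining `x` to `y` (nonrectifiable paths have infinite length). -/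
noncomputable def innerDist {E : Type*} [PseudoEMetricSpace E] (X : Set E)
    (x y : E) : ENNReal :=
  ⨅ (γ : Path x y) (_ : ∀ t, γ t ∈ X), eVariationOn γ Set.univ

theorem Path.edist_add_edist_le_eVariationOn {E : Type*} [PseudoEMetricSpace E] {x y : E}
    (γ : Path x y) (t : I) : edist x (γ t) + edist (γ t) y ≤ eVariationOn γ univ := by
  have h₁ := eVariationOn.edist_le γ (s := univ ∩ Icc 0 t)
    ⟨mem_univ _, le_rfl, t.2.1⟩ ⟨mem_univ _, t.2.1, le_rfl⟩
  have h₂ := eVariationOn.edist_le γ (s := univ ∩ Icc t 1)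
    ⟨mem_univ _, le_rfl, t.2.2⟩ ⟨mem_univ _, t.2.2, le_rfl⟩
  rw [γ.source, γ.target] at *
  calc edist x (γ t) + edist (γ t) y
      ≤ eVariationOn γ (univ ∩ Icc 0 t) + eVariationOn γ (univ ∩ Icc t 1) := add_le_add h₁ h₂
    _ = eVariationOn γ (univ ∩ Icc 0 1) := eVariationOn.Icc_add_Icc γ t.2.1 t.2.2 (mem_univ _)
    _ ≤ eVariationOn γ univ := eVariationOn.mono γ inter_subset_left

theorem edist_add_edist_le_innerDist {E : Type*} [PseudoEMetricSpace E] {X : Set E} {x y z : E}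
    (h : ∀ γ : Path x y, (∀ t, γ t ∈ X) → z ∈ range γ) :
    edist x z + edist z y ≤ innerDist X x y := by
  refine le_iInf₂ fun γ hγ => ?_
  obtain ⟨t, rfl⟩ := h γ hγ
  exact γ.edist_add_edist_le_eVariationOn t

abbrev cusp : Set (EuclideanSpace ℝ (Fin 2)) := {z | z 0 ^ 2 = z 1 ^ 3}

theorem eq_zero_of_mem_cusp {z : EuclideanSpace ℝ (Fin 2)} (hz : z ∈ cusp) (h₀ : z 0 = 0) :
    z = 0 := by
  have h₁ : z 1 = 0 := pow_eq_zero_iff three_ne_zero |>.1 (by rw [← hz, h₀]; ring)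
  ext i
  fin_cases i <;> simp [h₀, h₁]

theorem zero_mem_range_of_path_in_cusp {x y : EuclideanSpace ℝ (Fin 2)} (hx : 0 ≤ x 0)
    (hy : y 0 ≤ 0) (γ : Path x y) (hγ : ∀ t, γ t ∈ cusp) : 0 ∈ range γ := by
  have hcont : Continuous fun t => γ t 0 :=
    (continuous_apply 0).comp ((PiLp.continuous_ofLp 2 _).comp γ.continuous)
  obtain ⟨t, ht⟩ := intermediate_value_univ 1 0 hcont ⟨by simpa using hy, by simpa using hx⟩
  exact ⟨t, eq_zero_of_mem_cusp (hγ t) ht⟩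

noncomputable def cuspPoint (s : ℝ) : EuclideanSpace ℝ (Fin 2) := !₂[s ^ 3, s ^ 2]

theorem cuspPoint_mem (s : ℝ) : cuspPoint s ∈ cusp :=
  show (s ^ 3) ^ 2 = (s ^ 2) ^ 3 by ring

theorem norm_cuspPoint (s : ℝ) : ‖cuspPoint s‖ = √(s ^ 6 + s ^ 4) := by
  rw [EuclideanSpace.norm_eq, Fin.sum_univ_two]
  simp only [cuspPoint, Real.norm_eq_abs, sq_abs, Matrix.cons_val_zero, Matrix.cons_val_one]
  ring_nf

theorem norm_cuspPoint_neg (s : ℝ) : ‖cuspPoint (-s)‖ = ‖cuspPoint s‖ := by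
  rw [norm_cuspPoint, norm_cuspPoint, Even.neg_pow (by decide), Even.neg_pow (by decide)]

theorem sq_le_norm_cuspPoint (s : ℝ) : s ^ 2 ≤ ‖cuspPoint s‖ := by
  simpa [cuspPoint] using PiLp.norm_apply_le (cuspPoint s) 1

theorem norm_cuspPoint_sub_cuspPoint_neg (s : ℝ) :
    ‖cuspPoint s - cuspPoint (-s)‖ = 2 * |s| ^ 3 := by
  rw [EuclideanSpace.norm_eq, Fin.sum_univ_two]
  simp only [cuspPoint, PiLp.sub_apply, Real.norm_eq_abs, sq_abs, Matrix.cons_val_zero,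
    Matrix.cons_val_one, Even.neg_pow even_two, sub_self]
  rw [show (s ^ 3 - (-s) ^ 3) ^ 2 + 0 ^ 2 = (2 * s ^ 3) ^ 2 by ring, Real.sqrt_sq_eq_abs,
    abs_mul, abs_pow, abs_two]

theorem continuous_cuspPoint : Continuous cuspPoint := by
  unfold cuspPoint
  fun_prop

theorem exists_pos_norm_cuspPoint_lt_and_mul_lt_one {ε : ℝ} (hε : 0 < ε) (c : ℝ) :
    ∃ s > 0, ‖cuspPoint s‖ < ε ∧ c * s < 1 := by
  have hball : ∀ᶠ s in 𝓝 (0 : ℝ), ‖cuspPoint s‖ < ε := by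
    have h0 : ‖cuspPoint 0‖ = 0 := by simp [cuspPoint]
    exact continuous_cuspPoint.norm.tendsto' 0 0 h0 |>.eventually (gt_mem_nhds hε)
  have hc : ∀ᶠ s in 𝓝 (0 : ℝ), c * s < 1 :=
    (continuous_const_mul c).tendsto' 0 0 (mul_zero c) |>.eventually (gt_mem_nhds one_pos)
  obtain ⟨s, ⟨hsε, hsc⟩, hs⟩ :=
    ((hball.and hc).filter_mono nhdsWithin_le_nhds |>.and self_mem_nhdsWithin).exists
      (f := 𝓝[>] (0 : ℝ))
  exact ⟨s, hs, hsε, hsc⟩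

/-- The real cusp `x² = y³` is not normally embedded at the origin: for every
`ε > 0` and `λ > 0` there exist points `p, q` of the cusp inside the ball of
radius `ε` around the origin with `d_X(p, q) > λ‖p - q‖`. -/
theorem cusp_not_normally_embedded :
    ∀ ε > (0:ℝ), ∀ lam > (0:ℝ),
      ∃ p ∈ {z : EuclideanSpace ℝ (Fin 2) | (z 0) ^ 2 = (z 1) ^ 3} ∩ ball 0 ε,
      ∃ q ∈ {z : EuclideanSpace ℝ (Fin 2) | (z 0) ^ 2 = (z 1) ^ 3} ∩ ball 0 ε,
        ENNReal.ofReal (lam * ‖p - q‖) <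
          innerDist {z : EuclideanSpace ℝ (Fin 2) | (z 0) ^ 2 = (z 1) ^ 3} p q := by
  intro ε hε lam hlam
  obtain ⟨s, hs, hsε, hlam_s⟩ := exists_pos_norm_cuspPoint_lt_and_mul_lt_one hε lam
  refine ⟨cuspPoint s, ⟨cuspPoint_mem s, mem_ball_zero_iff.2 hsε⟩,
    cuspPoint (-s), ⟨cuspPoint_mem (-s), mem_ball_zero_iff.2 (norm_cuspPoint_neg s ▸ hsε)⟩, ?_⟩
  have hpath : ∀ γ : Path (cuspPoint s) (cuspPoint (-s)), (∀ t, γ t ∈ cusp) → 0 ∈ range γ :=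
    zero_mem_range_of_path_in_cusp (show 0 ≤ s ^ 3 by positivity)
      (show (-s) ^ 3 ≤ 0 by linarith [pow_pos hs 3])
  have hlt : lam * ‖cuspPoint s - cuspPoint (-s)‖ < ‖cuspPoint s‖ + ‖cuspPoint (-s)‖ := by
    rw [norm_cuspPoint_sub_cuspPoint_neg, norm_cuspPoint_neg, abs_of_pos hs]
    nlinarith [sq_le_norm_cuspPoint s, mul_lt_mul_of_pos_right hlam_s (pow_pos hs 2)]
  calc ENNReal.ofReal (lam * ‖cuspPoint s - cuspPoint (-s)‖)
      < ENNReal.ofReal (‖cuspPoint s‖ + ‖cuspPoint (-s)‖) :=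
        (ENNReal.ofReal_lt_ofReal_iff_of_nonneg (by positivity)).2 hlt
    _ = edist (cuspPoint s) 0 + edist 0 (cuspPoint (-s)) := by
        rw [ENNReal.ofReal_add (norm_nonneg _) (norm_nonneg _), edist_zero_right, edist_comm,
          edist_zero_right, ofReal_norm, ofReal_norm]
    _ ≤ innerDist cusp (cuspPoint s) (cuspPoint (-s)) := edist_add_edist_le_innerDist hpath
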